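/- arXiv:1110.4912 — 4 statements merged into one kernel-verified Lean document; each statement's English description precedes it below -/
import Mathlib

section
/- Let 0 < α < π/4, let s : ℝ → ℝ be a scaling function, let r > 0 and let λ ∈ ℂ with |λ| < sin α. Then for every x > 0 the point z = x + λ·s(x−r) satisfies z ≠ 0 and |arg z| < α (so z ∈ 𝕊_α ∪ (0,∞) ⊆ 𝕊_α); moreover for every x ≥ r one has |x + λ·s(x−r)| ≥ r. (The complex-scaled curve 𝔏_{λ,r} = {x + λ·s(x−r) : x > 0} lies in the sector 𝕊_α and stays at distance at least r from the origin beyond x = r.) -/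
/-!
A scaling function is monotone with slope at most one and vanishes on `(-∞, 0]`, so
`0 ≤ s (x - r) ≤ max (x - r) 0`. For `x > 0` this makes `‖λ s(x - r)‖ < x sin α`, and the disc
of radius `x sin α` about `x` lies in the sector `𝕊_α`, since `x sin α` is the distance from `x`
to the boundary rays. For `x ≥ r` the reverse triangle inequality and `‖λ‖ ≤ 1` give
`‖x + λ s(x - r)‖ ≥ x - s(x - r) ≥ r`.
-/

open Complex Set

noncomputable section

theorem Complex.abs_arg_lt_of_abs_im_lt {z : ℂ} {α : ℝ} (hα : 0 < α)
    (hα' : α ≤ Real.pi / 2) (hre : 0 ≤ z.re) (him : |z.im| < Real.sin α * ‖z‖) : |arg z| < α := by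
  have hz : 0 < ‖z‖ := by
    by_contra! h
    have : ‖z‖ = 0 := le_antisymm h (norm_nonneg z)
    simp only [this, mul_zero] at him
    exact (abs_nonneg _).not_gt him
  have hy : |z.im / ‖z‖| < Real.sin α := by
    rwa [abs_div, abs_norm, div_lt_iff₀ hz]
  have hπ := Real.pi_pos
  rw [arg_of_re_nonneg hre, abs_lt]
  constructor
  · rw [Real.lt_arcsin_iff_sin_lt' ⟨by linarith, by linarith⟩, Real.sin_neg]
    linarith [neg_abs_le (z.im / ‖z‖)]
  · rw [Real.arcsin_lt_iff_lt_sin' ⟨by linarith, hα'⟩]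
    exact (le_abs_self _).trans_lt hy

theorem Complex.abs_arg_lt_of_norm_sub_ofReal_lt {z : ℂ} {x α : ℝ} (hα : 0 < α)
    (hα' : α ≤ Real.pi / 2) (hx : 0 < x) (h : ‖z - x‖ < x * Real.sin α) :
    z ≠ 0 ∧ |arg z| < α := by
  set a := z.re
  set b := z.im
  have hπ := Real.pi_pos
  have hsin : 0 < Real.sin α := Real.sin_pos_of_pos_of_lt_pi hα (by linarith)
  have hcos : 0 ≤ Real.cos α := Real.cos_nonneg_of_mem_Icc ⟨by linarith, hα'⟩
  have hpyth := Real.sin_sq_add_cos_sq α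
  have hdist : (a - x) ^ 2 + b ^ 2 < (x * Real.sin α) ^ 2 := by
    have : ‖z - x‖ ^ 2 = (a - x) ^ 2 + b ^ 2 := by
      rw [Complex.sq_norm, Complex.normSq_apply]
      simp only [a, b, sub_re, sub_im, ofReal_re, ofReal_im, sub_zero]
      ring
    rw [← this]
    exact pow_lt_pow_left₀ h (norm_nonneg _) two_ne_zero
  -- `a sin α ∓ b cos α` is the distance from `z` to the lines bounding the sector; by
  -- Cauchy–Schwarz it is at least `x sin α - ‖z - x‖ > 0`.
  have hinner : |b| * Real.cos α < a * Real.sin α := by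
    rcases abs_cases b with ⟨hb, -⟩ | ⟨hb, -⟩ <;> rw [hb]
    · nlinarith [sq_nonneg ((a - x) * Real.cos α + b * Real.sin α), mul_pos hx hsin]
    · nlinarith [sq_nonneg ((a - x) * Real.cos α - b * Real.sin α), mul_pos hx hsin]
  have ha : 0 < a :=
    pos_of_mul_pos_left ((mul_nonneg (abs_nonneg b) hcos).trans_lt hinner) hsin.le
  have hz : z ≠ 0 := fun hz => by simp [a, hz] at ha
  refine ⟨hz, abs_arg_lt_of_abs_im_lt hα hα' ha.le ?_⟩
  have hnorm : ‖z‖ ^ 2 = a ^ 2 + b ^ 2 := by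
    rw [Complex.sq_norm, Complex.normSq_apply]; ring
  refine lt_of_pow_lt_pow_left₀ 2 (by positivity) ?_
  have hsq := pow_lt_pow_left₀ hinner (by positivity) two_ne_zero
  rw [mul_pow, mul_pow, sq_abs] at hsq
  rw [mul_pow, hnorm, sq_abs]
  linear_combination hsq - b ^ 2 * hpyth

section ScalingFunction

variable {s : ℝ → ℝ}

theorem nonneg_of_deriv_nonneg_of_eq_zero_of_nonpos (hs : Differentiable ℝ s)
    (hs0 : ∀ x ≤ 0, s x = 0) (hs' : ∀ x, 0 ≤ deriv s x) (t : ℝ) : 0 ≤ s t := by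
  rcases le_total t 0 with ht | ht
  · exact (hs0 t ht).ge
  · simpa [hs0 0 le_rfl] using mul_sub_le_image_sub_of_le_deriv hs hs' ht

theorem le_max_of_deriv_le_one_of_eq_zero_of_nonpos (hs : Differentiable ℝ s)
    (hs0 : ∀ x ≤ 0, s x = 0) (hs' : ∀ x, deriv s x ≤ 1) (t : ℝ) : s t ≤ max t 0 := by
  rcases le_total t 0 with ht | ht
  · simp [hs0 t ht]
  · simpa [hs0 0 le_rfl, ht] using image_sub_le_mul_sub_of_deriv_le hs hs' ht

end ScalingFunction

/-- The complex-scaled curve `𝔏_{λ,r} = {x + λ·s(x−r) : x > 0}` lies in the sector `𝕊_α`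
and stays at distance at least `r` from the origin beyond `x = r`. -/
theorem stmt_6 (α : ℝ) (hα : 0 < α) (hα' : α < Real.pi / 4)
    (s : ℝ → ℝ) (hs : ContDiff ℝ 1 s) (hs0 : ∀ x ≤ 0, s x = 0)
    (hs1 : ∀ x, 0 ≤ deriv s x) (hs2 : ∀ x, deriv s x ≤ 1)
    (r : ℝ) (hr : 0 < r) (l : ℂ) (hl : ‖l‖ < Real.sin α) :
    (∀ x : ℝ, 0 < x →
      ((x : ℂ) + l * (s (x - r) : ℝ)) ≠ 0 ∧
      |((x : ℂ) + l * (s (x - r) : ℝ)).arg| < α) ∧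
    (∀ x : ℝ, r ≤ x → r ≤ ‖(x : ℂ) + l * (s (x - r) : ℝ)‖) := by
  have hsd : Differentiable ℝ s := hs.differentiable one_ne_zero
  have hnonneg := nonneg_of_deriv_nonneg_of_eq_zero_of_nonpos hsd hs0 hs1
  have hle := le_max_of_deriv_le_one_of_eq_zero_of_nonpos hsd hs0 hs2
  have hnorm (x : ℝ) : ‖l * (s (x - r) : ℂ)‖ = ‖l‖ * s (x - r) := by
    rw [norm_mul, Complex.norm_real, Real.norm_of_nonneg (hnonneg _)]
  constructor
  · intro x hx
    have hsx : s (x - r) ≤ x := (hle _).trans (max_le (by linarith) hx.le)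
    refine abs_arg_lt_of_norm_sub_ofReal_lt hα (by linarith [Real.pi_pos]) hx ?_
    calc ‖(x : ℂ) + l * (s (x - r) : ℝ) - x‖ = ‖l‖ * s (x - r) := by
          rw [add_sub_cancel_left, hnorm]
      _ ≤ ‖l‖ * x := mul_le_mul_of_nonneg_left hsx (norm_nonneg l)
      _ < x * Real.sin α := by rw [mul_comm]; exact mul_lt_mul_of_pos_left hl hx
  · intro x hx
    have hl1 : ‖l‖ ≤ 1 := hl.le.trans (Real.sin_le_one α)
    have hsx : s (x - r) ≤ x - r := (hle _).trans_eq (max_eq_left (sub_nonneg.2 hx))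
    calc r ≤ x - ‖l‖ * s (x - r) := by nlinarith [hnonneg (x - r)]
      _ = ‖(x : ℂ)‖ - ‖l * (s (x - r) : ℝ)‖ := by
          rw [hnorm, Complex.norm_real, Real.norm_of_nonneg (hr.le.trans hx)]
      _ ≤ ‖(x : ℂ) + l * (s (x - r) : ℝ)‖ := norm_sub_le_norm_add _ _
end
end

section
/- Let θ ∈ [0, π/2), σ ∈ (0, π/2), and let z₀, e ∈ ℂ with z₀ ≠ 0, |arg z₀| ≤ θ and |e| ≤ sin(σ)·|z₀|. Then z₀ + e ≠ 0, |arg(z₀ + e)| ≤ θ + σ, and (1 − sin σ)·|z₀| ≤ |z₀ + e| ≤ (1 + sin σ)·|z₀|. (Stability of a sector condition under a relatively small perturbation; the perturbation step in the proof of Lemma 4.1.) -/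
open Complex

/-!
Write `z₀ + e = z₀ * (1 + w)` with `‖w‖ ≤ sin σ`. The closed disc of radius `sin σ` about `1` lies
in the sector `|arg| ≤ σ`, and `|arg|` is subadditive under multiplication, so
`|arg (z₀ + e)| ≤ |arg z₀| + σ`. The modulus bounds are the triangle inequality, and `sin σ < 1`
keeps `z₀ + e` away from `0`.
-/

namespace Complex

theorem abs_arg_mul_le (z w : ℂ) : |arg (z * w)| ≤ |arg z| + |arg w| := by
  rcases eq_or_ne z 0 with rfl | hz
  · simp
  rcases eq_or_ne w 0 with rfl | hw
  · simp
  by_cases hsum : arg z + arg w ∈ Set.Ioc (-Real.pi) Real.pi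
  · rw [arg_mul hz hw hsum]
    exact abs_add_le _ _
  · have hπ : Real.pi ≤ |arg z + arg w| := by
      simp only [Set.mem_Ioc, not_and_or, not_lt, not_le] at hsum
      rcases hsum with h | h
      · rw [abs_of_neg (by linarith [Real.pi_pos])]; linarith
      · rw [abs_of_pos (by linarith [Real.pi_pos])]; linarith
    linarith [abs_arg_le_pi (z * w), abs_add_le (arg z) (arg w)]

theorem abs_im_one_add_le_mul_norm {w : ℂ} {s : ℝ} (hw : ‖w‖ ≤ s) (hs : s ≤ 1) :
    |(1 + w).im| ≤ s * ‖1 + w‖ := by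
  have hs0 : 0 ≤ s := (norm_nonneg w).trans hw
  have hw2 : normSq w ≤ s ^ 2 := by
    rw [← Complex.sq_norm]
    exact pow_le_pow_left₀ (norm_nonneg w) hw 2
  rw [normSq_apply] at hw2
  refine abs_le_of_sq_le_sq ?_ (by positivity)
  rw [mul_pow, Complex.sq_norm, normSq_apply]
  simp only [add_re, add_im, one_re, one_im, zero_add]
  -- `s² ‖1 + w‖² - (im w)² = (s² - ‖w‖²) (1 - s²) + (s² + re w)²`
  nlinarith [mul_nonneg (sub_nonneg.2 hw2) (sub_nonneg.2 (pow_le_one₀ (n := 2) hs0 hs)),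
    sq_nonneg (w.re + s ^ 2)]

theorem abs_arg_one_add_le {w : ℂ} {σ : ℝ} (hσ : σ ∈ Set.Icc 0 (Real.pi / 2))
    (hw : ‖w‖ ≤ Real.sin σ) : |arg (1 + w)| ≤ σ := by
  have hright : |arg (1 + w)| ≤ Real.pi / 2 := by
    rw [abs_arg_le_pi_div_two_iff, add_re, one_re]
    linarith [neg_abs_le w.re, abs_re_le_norm w, Real.sin_le_one σ]
  have hsin : Real.sin |arg (1 + w)| ≤ Real.sin σ := by
    rw [← Real.abs_sin_eq_sin_abs_of_abs_le_pi (abs_arg_le_pi _), sin_arg, abs_div, abs_norm]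
    exact div_le_of_le_mul₀ (norm_nonneg _) ((norm_nonneg w).trans hw)
      (abs_im_one_add_le_mul_norm hw (Real.sin_le_one σ))
  exact (Real.strictMonoOn_sin.le_iff_le
    ⟨by linarith [abs_nonneg (arg (1 + w)), Real.pi_pos], hright⟩
    ⟨by linarith [hσ.1, Real.pi_pos], hσ.2⟩).1 hsin

end Complex

theorem stmt_10_general (θ σ : ℝ)
    (hσ : σ ∈ Set.Ioo (0:ℝ) (Real.pi / 2))
    (z₀ e : ℂ) (hz₀ : z₀ ≠ 0) (harg : |z₀.arg| ≤ θ)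
    (he : ‖e‖ ≤ Real.sin σ * ‖z₀‖) :
    z₀ + e ≠ 0 ∧
    |(z₀ + e).arg| ≤ θ + σ ∧
    (1 - Real.sin σ) * ‖z₀‖ ≤ ‖z₀ + e‖ ∧
    ‖z₀ + e‖ ≤ (1 + Real.sin σ) * ‖z₀‖ := by
  obtain ⟨hσ0, hσ2⟩ := hσ
  have hz₀pos : 0 < ‖z₀‖ := norm_pos_iff.2 hz₀
  have hsin_lt_one : Real.sin σ < 1 := by
    simpa using Real.strictMonoOn_sin ⟨by linarith [Real.pi_pos], hσ2.le⟩
      ⟨by linarith [Real.pi_pos], le_rfl⟩ hσ2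
  have hw : ‖e / z₀‖ ≤ Real.sin σ := by
    rwa [norm_div, div_le_iff₀ hz₀pos]
  have hfactor : z₀ + e = z₀ * (1 + e / z₀) := by field_simp
  have hlow : (1 - Real.sin σ) * ‖z₀‖ ≤ ‖z₀ + e‖ := by
    linarith [norm_sub_le_norm_add z₀ e]
  refine ⟨fun h ↦ ?_, ?_, hlow, by linarith [norm_add_le z₀ e]⟩
  · rw [h, norm_zero] at hlow
    linarith [mul_pos (sub_pos.2 hsin_lt_one) hz₀pos]
  · rw [hfactor]
    exact (abs_arg_mul_le _ _).trans (add_le_add harg (abs_arg_one_add_le ⟨hσ0.le, hσ2.le⟩ hw))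

/-- Stability of a sector condition under a relatively small perturbation
(the perturbation step in the proof of Lemma 4.1). -/
theorem stmt_10 (θ σ : ℝ) (hθ : θ ∈ Set.Ico (0:ℝ) (Real.pi / 2))
    (hσ : σ ∈ Set.Ioo (0:ℝ) (Real.pi / 2))
    (z₀ e : ℂ) (hz₀ : z₀ ≠ 0) (harg : |z₀.arg| ≤ θ)
    (he : ‖e‖ ≤ Real.sin σ * ‖z₀‖) :
    z₀ + e ≠ 0 ∧
    |(z₀ + e).arg| ≤ θ + σ ∧
    (1 - Real.sin σ) * ‖z₀‖ ≤ ‖z₀ + e‖ ∧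
    ‖z₀ + e‖ ≤ (1 + Real.sin σ) * ‖z₀‖ :=
  stmt_10_general θ σ hσ z₀ e hz₀ harg he
end

section
/- Let n ≥ 1, let 0 < α < π/4 and σ ∈ (0, π/2 − 2α), let λ ∈ ℂ with |λ| < sin α, let t ∈ [0,1], and let c ≥ 0 satisfy 4(n+1)²c ≤ sin(σ/2). Let E be an (n+1)×(n+1) complex matrix all of whose entries have modulus at most c, and let M = diag{(1+λt)^{−2}, 1, …, 1} + E. Set δ = min{ 1/4 − (n+1)²c , (12 + (n+1)²c)^{−1} } > 0 and φ = 2α + σ < π/2. Then for every ξ ∈ ℂ^{n+1} one has δ|ξ|² ≤ |⟨Mξ, ξ⟩| ≤ δ^{−1}|ξ|², and if ξ ≠ 0 then |arg⟨Mξ, ξ⟩| ≤ φ. (Pointwise sectorial estimate (4.4) on the numerical range of the inverse scaled metric matrix 𝖾_{λ,r}^{−1}; the core of Lemma 4.1.) -/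
/-!
Put `w = (1 + λt)⁻²`. Then `⟨Mξ, ξ⟩ = z + ε` with `z = w|ξ₀|² + ∑_{j ≥ 1} |ξ_j|²` and
`|ε| ≤ (n+1)²c|ξ|²`. As `|(1 + λt) - 1| < sin α < sin(π/4)`, the number `1 + λt` lies in the sector
`|arg| ≤ α` and `1/12 < |1 + λt|² < 3`; so `w` lies in the sector `|arg| ≤ 2α`, with
`1/3 < |w| < 12`. A sector of opening less than `π` is a convex cone, so `z` lies in it too, and
`Re w ≥ 0` gives `|z| ≥ |ξ|²/4`. Hence `|ε| ≤ sin(σ/2)|z|`, and a disc of radius `sin β · |z|`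
around `z` is seen from the origin under an angle at most `β` around `arg z`; this gives
`|arg⟨Mξ, ξ⟩| ≤ 2α + σ/2`, while `|z| - |ε| ≤ |⟨Mξ, ξ⟩| ≤ |z| + |ε|` gives the modulus bounds.
-/

open Complex Finset
open scoped Real

namespace Complex

theorem abs_arg_le_iff_cos_mul_norm_le_re {z : ℂ} {θ : ℝ} (h0 : 0 ≤ θ) (hπ : θ ≤ π) :
    |arg z| ≤ θ ↔ Real.cos θ * ‖z‖ ≤ z.re := by
  rcases eq_or_ne z 0 with rfl | hz
  · simp [h0]
  rw [← norm_mul_cos_arg z, mul_comm, mul_le_mul_iff_of_pos_left (norm_pos_iff.2 hz),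
    ← Real.cos_abs (arg z)]
  exact (Real.strictAntiOn_cos.le_iff_ge ⟨h0, hπ⟩ ⟨abs_nonneg _, abs_arg_le_pi z⟩).symm

theorem abs_arg_le_of_norm_sub_one_le {q : ℂ} {β : ℝ} (h0 : 0 ≤ β) (hβ : β ≤ π / 2)
    (hq : ‖q - 1‖ ≤ Real.sin β) : |arg q| ≤ β := by
  rw [abs_arg_le_iff_cos_mul_norm_le_re h0 (by linarith [Real.pi_pos])]
  have hcos : 0 ≤ Real.cos β := Real.cos_nonneg_of_mem_Icc ⟨by linarith [Real.pi_pos], hβ⟩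
  have hdisk : (q.re - 1) ^ 2 + q.im ^ 2 ≤ Real.sin β ^ 2 := by
    have := pow_le_pow_left₀ (norm_nonneg _) hq 2
    rwa [Complex.sq_norm, normSq_apply, sub_re, sub_im, one_re, one_im, sub_zero, ← sq, ← sq] at this
  have hre : 0 ≤ q.re := by
    have := (abs_re_le_norm (q - 1)).trans hq
    rw [sub_re, one_re, abs_le] at this
    linarith [Real.sin_le_one β]
  refine le_of_pow_le_pow_left₀ two_ne_zero hre ?_
  rw [mul_pow, Complex.sq_norm, normSq_apply, ← sq, ← sq]
  -- `x² - cos²β (x² + y²) ≥ (x - cos²β)²` on the disk `(x - 1)² + y² ≤ sin²β`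
  nlinarith [mul_le_mul_of_nonneg_left hdisk (sq_nonneg (Real.cos β)),
    sq_nonneg (q.re - Real.cos β ^ 2), Real.sin_sq_add_cos_sq β]

theorem abs_arg_le_add_of_norm_sub_le {q z : ℂ} {θ β : ℝ} (hβ0 : 0 ≤ β) (hβ : β ≤ π / 2)
    (hθβ : θ + β < π) (hz : |arg z| ≤ θ) (hq : ‖q - z‖ ≤ Real.sin β * ‖z‖) :
    |arg q| ≤ θ + β := by
  have hθ : 0 ≤ θ := (abs_nonneg _).trans hz
  rcases eq_or_ne z 0 with rfl | hz0
  · obtain rfl : q = 0 := by simpa using hq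
    simpa using add_nonneg hθ hβ0
  rcases eq_or_ne q 0 with rfl | hq0
  · simpa using add_nonneg hθ hβ0
  have hratio : |arg (q / z)| ≤ β := by
    refine abs_arg_le_of_norm_sub_one_le hβ0 hβ ?_
    rwa [div_sub_one hz0, norm_div, div_le_iff₀ (norm_pos_iff.2 hz0)]
  have hsum : |arg z + arg (q / z)| ≤ θ + β := (abs_add_le _ _).trans (add_le_add hz hratio)
  rw [← mul_div_cancel₀ q hz0, arg_mul hz0 (div_ne_zero hq0 hz0)]
  · exact hsum
  · obtain ⟨h1, h2⟩ := abs_le.1 hsum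
    exact ⟨by linarith, by linarith⟩

theorem abs_arg_inv_sq_le {z : ℂ} {θ : ℝ} (hθ : θ < π / 2) (hz : |arg z| ≤ θ) :
    |arg (z ^ 2)⁻¹| ≤ 2 * θ := by
  have hθ0 : 0 ≤ θ := (abs_nonneg _).trans hz
  rw [abs_arg_inv]
  rcases eq_or_ne z 0 with rfl | hz0
  · simpa using hθ0
  obtain ⟨h1, h2⟩ := abs_le.1 hz
  rw [sq, arg_mul hz0 hz0 ⟨by linarith, by linarith⟩, ← two_mul, abs_mul, abs_two]
  linarith

theorem abs_arg_mul_ofReal_add_ofReal_le {w : ℂ} {θ a b : ℝ} (h0 : 0 ≤ θ) (hθ : θ ≤ π / 2)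
    (hw : |arg w| ≤ θ) (ha : 0 ≤ a) (hb : 0 ≤ b) : |arg (w * a + b)| ≤ θ := by
  have hπ : θ ≤ π := by linarith [Real.pi_pos]
  rw [abs_arg_le_iff_cos_mul_norm_le_re h0 hπ] at hw ⊢
  have hcos : 0 ≤ Real.cos θ := Real.cos_nonneg_of_mem_Icc ⟨by linarith [Real.pi_pos], hθ⟩
  calc Real.cos θ * ‖w * a + b‖ ≤ Real.cos θ * (‖w‖ * a + b) := by
        gcongr
        refine (norm_add_le _ _).trans_eq ?_
        rw [norm_mul, norm_real, norm_real, Real.norm_of_nonneg ha, Real.norm_of_nonneg hb]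
    _ ≤ w.re * a + b := by nlinarith [Real.cos_le_one θ]
    _ = (w * a + b).re := by simp

theorem norm_sq_mul_add_sq_le_norm_mul_ofReal_add_ofReal_sq {w : ℂ} {a b : ℝ} (hw : 0 ≤ w.re)
    (ha : 0 ≤ a) (hb : 0 ≤ b) : ‖w‖ ^ 2 * a ^ 2 + b ^ 2 ≤ ‖w * a + b‖ ^ 2 := by
  simp only [Complex.sq_norm, normSq_apply, add_re, add_im, mul_re, mul_im, ofReal_re, ofReal_im]
  nlinarith [mul_nonneg (mul_nonneg hw ha) hb]

end Complex

theorem norm_inv_sq_mem_Ioo {z : ℂ} {r : ℝ} (hz : ‖z - 1‖ ≤ r) (hr : r < √2 / 2) :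
    1 / 3 < ‖(z ^ 2)⁻¹‖ ∧ ‖(z ^ 2)⁻¹‖ < 12 := by
  have hlow : 1 - r ≤ ‖z‖ := by
    have := norm_sub_norm_le (1 : ℂ) z
    rw [norm_one, norm_sub_rev] at this
    linarith
  have hup : ‖z‖ ≤ 1 + r := by
    have := norm_sub_norm_le z 1
    rw [norm_one] at this
    linarith
  have h2 : √2 ^ 2 = 2 := Real.sq_sqrt zero_le_two
  have h2' : √2 < 17 / 12 := by nlinarith [Real.sqrt_nonneg 2]
  have hr0 : 0 ≤ r := (norm_nonneg _).trans hz
  have hsq_low : 1 / 12 < ‖z‖ ^ 2 := by nlinarith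
  have hsq_up : ‖z‖ ^ 2 < 3 := by nlinarith [norm_nonneg z]
  rw [norm_inv, norm_pow]
  constructor
  · rw [lt_inv_comm₀ (by norm_num) (by linarith)]; linarith
  · rw [inv_lt_comm₀ (by linarith) (by norm_num)]; linarith

theorem inv_sq_bounds_of_norm_sub_one_le_sin {z : ℂ} {α : ℝ} (hα : 0 ≤ α) (hα' : α < π / 4)
    (hz : ‖z - 1‖ ≤ Real.sin α) :
    |arg (z ^ 2)⁻¹| ≤ 2 * α ∧ 1 / 3 < ‖(z ^ 2)⁻¹‖ ∧ ‖(z ^ 2)⁻¹‖ < 12 := by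
  have hsin : Real.sin α < √2 / 2 := by
    rw [← Real.sin_pi_div_four]
    exact Real.sin_lt_sin_of_lt_of_le_pi_div_two (by linarith) (by linarith) hα'
  refine ⟨?_, norm_inv_sq_mem_Ioo hz hsin⟩
  exact abs_arg_inv_sq_le (by linarith) (abs_arg_le_of_norm_sub_one_le hα (by linarith) hz)

theorem norm_quadForm_le {ι : Type*} [Fintype ι] (E : Matrix ι ι ℂ) {c : ℝ} (hc : 0 ≤ c)
    (hE : ∀ j k, ‖E j k‖ ≤ c) (ξ : ι → ℂ) :
    ‖∑ j, ∑ k, starRingEnd ℂ (ξ j) * E j k * ξ k‖ ≤ Fintype.card ι * c * ∑ j, ‖ξ j‖ ^ 2 :=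
  calc ‖∑ j, ∑ k, starRingEnd ℂ (ξ j) * E j k * ξ k‖
      ≤ ∑ j, ∑ k, ‖ξ j‖ * c * ‖ξ k‖ := by
        refine (norm_sum_le _ _).trans (sum_le_sum fun j _ => ?_)
        refine (norm_sum_le _ _).trans (sum_le_sum fun k _ => ?_)
        rw [norm_mul, norm_mul, Complex.norm_conj]
        gcongr
        exact hE j k
    _ = c * (∑ j, ‖ξ j‖) ^ 2 := by
        rw [sq, sum_mul_sum, mul_sum]
        refine sum_congr rfl fun j _ => ?_
        rw [mul_sum]
        exact sum_congr rfl fun k _ => by ring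
    _ ≤ c * (Fintype.card ι * ∑ j, ‖ξ j‖ ^ 2) := by
        gcongr
        exact sq_sum_le_card_mul_sum_sq
    _ = _ := by ring

theorem quadForm_diagonal_add {ι : Type*} [Fintype ι] [DecidableEq ι] (d : ι → ℂ)
    (E : Matrix ι ι ℂ) (ξ : ι → ℂ) :
    ∑ j, ∑ k, starRingEnd ℂ (ξ j) * (Matrix.diagonal d + E) j k * ξ k =
      ∑ j, d j * (‖ξ j‖ ^ 2 : ℝ) + ∑ j, ∑ k, starRingEnd ℂ (ξ j) * E j k * ξ k := by
  simp only [Matrix.add_apply, mul_add, add_mul, sum_add_distrib, Matrix.diagonal_apply,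
    mul_ite, ite_mul, mul_zero, zero_mul, sum_ite_eq, mem_univ, if_true]
  congr 1
  refine sum_congr rfl fun j _ => ?_
  rw [mul_comm (starRingEnd ℂ (ξ j)), mul_assoc, Complex.conj_mul', Complex.ofReal_pow]

theorem sectorial_estimate {w ε : ℂ} {θ β x a b : ℝ} (hθ : 0 ≤ θ) (hβ : 0 ≤ β)
    (hθβ : θ + β < π / 2) (hw : |arg w| ≤ θ) (hw₁ : 1 / 3 < ‖w‖) (hw₂ : ‖w‖ < 12)
    (ha : 0 ≤ a) (hb : 0 ≤ b) (hx : 4 * x ≤ Real.sin β) (hε : ‖ε‖ ≤ x * (a + b)) :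
    (1 / 4 - x) * (a + b) ≤ ‖w * a + b + ε‖ ∧ ‖w * a + b + ε‖ ≤ (12 + x) * (a + b) ∧
      |arg (w * a + b + ε)| ≤ θ + β := by
  have hwre : 0 ≤ w.re := abs_arg_le_pi_div_two_iff.1 (by linarith)
  have hz_low : (a + b) / 4 ≤ ‖w * a + b‖ := by
    refine le_of_pow_le_pow_left₀ two_ne_zero (norm_nonneg _) ?_
    have := norm_sq_mul_add_sq_le_norm_mul_ofReal_add_ofReal_sq hwre ha hb
    nlinarith [sq_nonneg (a / 3 - 3 * b), mul_le_mul_of_nonneg_right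
      (pow_le_pow_left₀ (by norm_num) hw₁.le 2) (sq_nonneg a)]
  have hz_up : ‖w * a + b‖ ≤ 12 * (a + b) := by
    calc ‖w * a + b‖ ≤ ‖w‖ * a + b := by
          refine (norm_add_le _ _).trans_eq ?_
          rw [norm_mul, norm_real, norm_real, Real.norm_of_nonneg ha, Real.norm_of_nonneg hb]
      _ ≤ 12 * (a + b) := by nlinarith
  have hz_arg : |arg (w * a + b)| ≤ θ :=
    abs_arg_mul_ofReal_add_ofReal_le hθ (by linarith) hw ha hb
  have hε_small : ‖ε‖ ≤ Real.sin β * ‖w * a + b‖ := by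
    calc ‖ε‖ ≤ x * (a + b) := hε
      _ ≤ Real.sin β / 4 * (a + b) := by gcongr; linarith
      _ ≤ Real.sin β * ‖w * a + b‖ := by
          nlinarith [Real.sin_nonneg_of_nonneg_of_le_pi hβ (by linarith : β ≤ π)]
  refine ⟨?_, ?_, ?_⟩
  · linarith [norm_le_add_norm_add (w * a + b : ℂ) ε]
  · linarith [norm_add_le (w * a + b : ℂ) ε]
  · refine abs_arg_le_add_of_norm_sub_le hβ (by linarith) (by linarith) hz_arg ?_
    rwa [add_sub_cancel_left]

theorem stmt_11_general (n : ℕ) (α σ : ℝ) (hα : 0 < α) (hα' : α < Real.pi / 4)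
    (hσ : 0 < σ) (hσ' : σ < Real.pi / 2 - 2 * α)
    (l : ℂ) (hl : ‖l‖ < Real.sin α) (t : ℝ) (ht : t ∈ Set.Icc (0:ℝ) 1)
    (c : ℝ) (hc : 0 ≤ c) (hc' : 4 * (n + 1) ^ 2 * c ≤ Real.sin (σ / 2))
    (E M : Matrix (Fin (n + 1)) (Fin (n + 1)) ℂ)
    (hE : ∀ j k, ‖E j k‖ ≤ c)
    (hM : M = Matrix.diagonal
        (fun j : Fin (n + 1) => if j = 0 then ((1 + l * (t : ℂ)) ^ 2)⁻¹ else 1) + E)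
    (δ φ : ℝ)
    (hδ : δ = min (1 / 4 - (n + 1) ^ 2 * c) ((12 + (n + 1) ^ 2 * c)⁻¹))
    (hφ : φ = 2 * α + σ) :
    0 < δ ∧ φ < Real.pi / 2 ∧
    ∀ ξ : Fin (n + 1) → ℂ,
      δ * (∑ j, ‖ξ j‖ ^ 2) ≤
        ‖∑ j, ∑ k, (starRingEnd ℂ) (ξ j) * M j k * ξ k‖ ∧
      ‖∑ j, ∑ k, (starRingEnd ℂ) (ξ j) * M j k * ξ k‖ ≤
        δ⁻¹ * (∑ j, ‖ξ j‖ ^ 2) ∧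
      (ξ ≠ 0 → |(∑ j, ∑ k, (starRingEnd ℂ) (ξ j) * M j k * ξ k).arg| ≤ φ) := by
  obtain ⟨ht0, ht1⟩ := ht
  set x : ℝ := ((n : ℝ) + 1) ^ 2 * c
  have hsin_σ : Real.sin (σ / 2) < 1 := by
    rw [← Real.sin_pi_div_two]
    exact Real.sin_lt_sin_of_lt_of_le_pi_div_two (by linarith) le_rfl (by linarith)
  have hδ_pos : 0 < δ := by
    rw [hδ]
    exact lt_min (by linarith) (by positivity)
  have hδ_low : δ ≤ 1 / 4 - x := hδ ▸ min_le_left _ _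
  have hδ_up : 12 + x ≤ δ⁻¹ :=
    (le_inv_comm₀ hδ_pos (by positivity)).1 (hδ ▸ min_le_right _ _)
  refine ⟨hδ_pos, by linarith, fun ξ => ?_⟩
  set w : ℂ := ((1 + l * (t : ℂ)) ^ 2)⁻¹
  have hz₀ : ‖1 + l * (t : ℂ) - 1‖ ≤ Real.sin α := by
    rw [add_sub_cancel_left, norm_mul, norm_real, Real.norm_of_nonneg ht0]
    nlinarith [norm_nonneg l]
  obtain ⟨hw_arg, hw₁, hw₂⟩ := inv_sq_bounds_of_norm_sub_one_le_sin hα.le hα' hz₀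
  set a : ℝ := ‖ξ 0‖ ^ 2
  set b : ℝ := ∑ i : Fin n, ‖ξ i.succ‖ ^ 2
  set ε : ℂ := ∑ j, ∑ k, starRingEnd ℂ (ξ j) * E j k * ξ k
  have ha : 0 ≤ a := sq_nonneg _
  have hb : 0 ≤ b := sum_nonneg fun _ _ => sq_nonneg _
  have hs : ∑ j, ‖ξ j‖ ^ 2 = a + b := Fin.sum_univ_succ _
  have hQ : ∑ j, ∑ k, starRingEnd ℂ (ξ j) * M j k * ξ k = w * a + b + ε := by
    rw [hM, quadForm_diagonal_add, Fin.sum_univ_succ]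
    simp [a, b, w, ε]
  have hε : ‖ε‖ ≤ x * (a + b) := by
    refine (norm_quadForm_le E hc hE ξ).trans ?_
    rw [hs, Fintype.card_fin, Nat.cast_add, Nat.cast_one]
    gcongr
    have h1 : (1 : ℝ) ≤ n + 1 := by linarith [(n.cast_nonneg : (0 : ℝ) ≤ n)]
    exact mul_le_mul_of_nonneg_right (le_self_pow₀ h1 two_ne_zero) hc
  obtain ⟨hQ_low, hQ_up, hQ_arg⟩ :=
    sectorial_estimate (β := σ / 2) (by linarith) (by linarith) (by linarith) hw_arg hw₁ hw₂
      ha hb (by linarith) hε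
  rw [hQ, hs]
  exact ⟨(mul_le_mul_of_nonneg_right hδ_low (add_nonneg ha hb)).trans hQ_low,
    hQ_up.trans (mul_le_mul_of_nonneg_right hδ_up (add_nonneg ha hb)), fun _ => by linarith⟩

/-- Pointwise sectorial estimate (4.4) on the numerical range of the inverse scaled
metric matrix `𝖾_{λ,r}^{−1}`; the core of Lemma 4.1. -/
theorem stmt_11 (n : ℕ) (hn : 1 ≤ n) (α σ : ℝ) (hα : 0 < α) (hα' : α < Real.pi / 4)
    (hσ : 0 < σ) (hσ' : σ < Real.pi / 2 - 2 * α)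
    (l : ℂ) (hl : ‖l‖ < Real.sin α) (t : ℝ) (ht : t ∈ Set.Icc (0:ℝ) 1)
    (c : ℝ) (hc : 0 ≤ c) (hc' : 4 * (n + 1) ^ 2 * c ≤ Real.sin (σ / 2))
    (E M : Matrix (Fin (n + 1)) (Fin (n + 1)) ℂ)
    (hE : ∀ j k, ‖E j k‖ ≤ c)
    (hM : M = Matrix.diagonal
        (fun j : Fin (n + 1) => if j = 0 then ((1 + l * (t : ℂ)) ^ 2)⁻¹ else 1) + E)
    (δ φ : ℝ)
    (hδ : δ = min (1 / 4 - (n + 1) ^ 2 * c) ((12 + (n + 1) ^ 2 * c)⁻¹))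
    (hφ : φ = 2 * α + σ) :
    0 < δ ∧ φ < Real.pi / 2 ∧
    ∀ ξ : Fin (n + 1) → ℂ,
      δ * (∑ j, ‖ξ j‖ ^ 2) ≤
        ‖∑ j, ∑ k, (starRingEnd ℂ) (ξ j) * M j k * ξ k‖ ∧
      ‖∑ j, ∑ k, (starRingEnd ℂ) (ξ j) * M j k * ξ k‖ ≤
        δ⁻¹ * (∑ j, ‖ξ j‖ ^ 2) ∧
      (ξ ≠ 0 → |(∑ j, ∑ k, (starRingEnd ℂ) (ξ j) * M j k * ξ k).arg| ≤ φ) :=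
  stmt_11_general n α σ hα hα' hσ hσ' l hl t ht c hc hc' E M hE hM δ φ hδ hφ
end

section
/- Let (X, μ) be a measure space, m ≥ 1, φ ∈ [0, π/2), δ ∈ (0,1], ρ₀ ≥ 0 and c₀ ≥ 0. Let M : X → ℂ^{m×m} be such that for μ-a.e. x and all ξ ∈ ℂ^m: Re⟨M(x)ξ, ξ⟩ ≥ 0, |Im⟨M(x)ξ, ξ⟩| ≤ tan(φ)·Re⟨M(x)ξ, ξ⟩, and |⟨M(x)ξ, ξ⟩| ≤ δ^{−1}|ξ|². Let ρ : X → ℂ with |ρ(x)| ≤ ρ₀ a.e., let b : X → ℂ^m with |b(x)|² ≤ c₀ a.e., let u : X → ℂ with ∫|u|² dμ < ∞, and let F : X → ℂ^m be measurable with ∫ Re⟨M(x)F(x), F(x)⟩ dμ < ∞ and with x ↦ ρ(x)·⟨M(x)F(x), u(x)·b(x)⟩ integrable. Then for every ε > 0: |∫ ρ(x)·⟨M(x)F(x), u(x)·b(x)⟩ dμ(x)| ≤ ε·∫ Re⟨M F, F⟩ dμ + (ρ₀²·c₀·δ^{−1}·(1+tan φ)² / (4ε))·∫ |u|² dμ.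 (Relative bound of the first-order cross term against the principal sectorial form; the abstracted content of Lemma 4.2.) -/
/-! Splitting the polarization identity for `B(v, w)` into real and imaginary parts, the sector
condition `|Im q| ≤ γ Re q` gives `2 Re B(v, w) ≤ (1 + γ) (Re q(v) + Re q(w))`. Replacing `v` by
`t v` for real `t` turns this into a nonnegative quadratic polynomial in `t`, whose discriminant
bounds `(Re B(v, w))²`; rotating `v` by the phase of `B(v, w)` yields the sectorial Cauchy–Schwarz
inequality `|B(v, w)|² ≤ (1 + γ)² Re q(v) Re q(w)`. Pointwise, `Re q(u b) ≤ δ⁻¹ c₀ |u|²`, and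
Young's inequality followed by integration gives the claim. -/

open Complex Finset MeasureTheory ComplexConjugate

theorem le_add_div_of_sq_le_mul {x a b ε : ℝ} (h : x ^ 2 ≤ a * b) (ha : 0 ≤ a) (hb : 0 ≤ b)
    (hε : 0 < ε) : x ≤ ε * a + b / (4 * ε) := by
  refine le_of_sq_le_sq (h.trans ?_) (by positivity)
  calc a * b = 4 * (ε * a) * (b / (4 * ε)) := by field_simp
    _ ≤ (ε * a + b / (4 * ε)) ^ 2 := four_mul_le_sq_add _ _

theorem LinearMap.apply_add_smul_self {E : Type*} [AddCommGroup E] [Module ℂ E]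
    (B : E →ₗ⋆[ℂ] E →ₗ[ℂ] ℂ) (v w : E) (c : ℂ) :
    B (v + c • w) (v + c • w) =
      B v v + c * B v w + conj c * B w v + (normSq c : ℂ) * B w w := by
  simp only [map_add, map_smulₛₗ, LinearMap.add_apply, LinearMap.smul_apply, smul_eq_mul,
    RingHom.id_apply, normSq_eq_conj_mul_self]
  ring

def IsSectorial {E : Type*} [AddCommGroup E] [Module ℂ E] (B : E →ₗ⋆[ℂ] E →ₗ[ℂ] ℂ) (γ : ℝ) :
    Prop :=
  ∀ v, 0 ≤ (B v v).re ∧ |(B v v).im| ≤ γ * (B v v).re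

namespace IsSectorial

variable {E : Type*} [AddCommGroup E] [Module ℂ E] {B : E →ₗ⋆[ℂ] E →ₗ[ℂ] ℂ} {γ : ℝ}

theorem two_mul_re_le (h : IsSectorial B γ) (v w : E) :
    2 * (B v w).re ≤ (1 + γ) * ((B v v).re + (B w w).re) := by
  have h₁ := h (v + (1 : ℂ) • w)
  have h₂ := h (v + (-1 : ℂ) • w)
  have h₃ := h (v + I • w)
  have h₄ := h (v + (-I) • w)
  rw [B.apply_add_smul_self] at h₁ h₂ h₃ h₄
  simp only [one_mul, map_one, ofReal_one, add_re, add_im, neg_mul, map_neg, normSq_neg, neg_re,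
    neg_im, conj_I, normSq_I, mul_re, I_re, zero_mul, I_im, zero_sub, neg_neg, mul_im, zero_add]
    at h₁ h₂ h₃ h₄
  rw [abs_le] at h₁ h₂ h₃ h₄
  -- 4 Re B(v, w) = Re q(v + w) - Re q(v - w) + Im q(v + i w) - Im q(v - i w)
  linarith [h₁.1, h₂.1, h₃.2.1, h₄.2.2]

theorem re_sq_le (h : IsSectorial B γ) (v w : E) :
    (B v w).re ^ 2 ≤ (1 + γ) ^ 2 * (B v v).re * (B w w).re := by
  have hquad : ∀ t : ℝ, 0 ≤ (1 + γ) * (B v v).re * (t * t) + (-2 * (B v w).re) * t +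
      (1 + γ) * (B w w).re := by
    intro t
    have ht := h.two_mul_re_le ((t : ℂ) • v) w
    simp only [map_smulₛₗ, LinearMap.smul_apply, smul_eq_mul, RingHom.id_apply, conj_ofReal,
      ← mul_assoc, ← ofReal_mul, re_ofReal_mul] at ht
    nlinarith
  have := discrim_le_zero hquad
  rw [discrim] at this
  nlinarith

theorem norm_sq_le (h : IsSectorial B γ) (v w : E) :
    ‖B v w‖ ^ 2 ≤ (1 + γ) ^ 2 * (B v v).re * (B w w).re := by
  have hz := h.re_sq_le (B v w • v) w
  simp only [map_smulₛₗ, LinearMap.smul_apply, smul_eq_mul, RingHom.id_apply, ← mul_assoc,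
    conj_mul', mul_conj', ← ofReal_pow, ofReal_re, re_ofReal_mul] at hz
  have hvw := mul_nonneg (mul_nonneg (sq_nonneg (1 + γ)) (h v).1) (h w).1
  nlinarith [sq_nonneg ‖B v w‖]

theorem norm_mul_apply_le (h : IsSectorial B γ) {ρ : ℂ} {ρ₀ : ℝ} (hρ : ‖ρ‖ ≤ ρ₀) {w : E} {K : ℝ}
    (hw : (B w w).re ≤ K) {ε : ℝ} (hε : 0 < ε) (v : E) :
    ‖ρ * B w v‖ ≤ ε * (B v v).re + ρ₀ ^ 2 * K * (1 + γ) ^ 2 / (4 * ε) := by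
  have hK : 0 ≤ K := (h w).1.trans hw
  have hsq : ‖ρ * B w v‖ ^ 2 ≤ (B v v).re * (ρ₀ ^ 2 * K * (1 + γ) ^ 2) :=
    calc ‖ρ * B w v‖ ^ 2 = ‖ρ‖ ^ 2 * ‖B w v‖ ^ 2 := by rw [norm_mul, mul_pow]
      _ ≤ ρ₀ ^ 2 * ((1 + γ) ^ 2 * (B w w).re * (B v v).re) := by
        gcongr
        exact h.norm_sq_le w v
      _ ≤ ρ₀ ^ 2 * ((1 + γ) ^ 2 * K * (B v v).re) := by
        gcongr
        exact (h v).1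
      _ = (B v v).re * (ρ₀ ^ 2 * K * (1 + γ) ^ 2) := by ring
  exact le_add_div_of_sq_le_mul hsq (h v).1 (by positivity) hε

end IsSectorial

theorem re_apply_smul_self_le {n : Type*} [Fintype n] {B : (n → ℂ) → (n → ℂ) → ℂ} {K c₀ : ℝ}
    (hK : 0 ≤ K) (hB : ∀ ξ, ‖B ξ ξ‖ ≤ K * ∑ j, ‖ξ j‖ ^ 2) (c : ℂ) {β : n → ℂ}
    (hβ : ∑ j, ‖β j‖ ^ 2 ≤ c₀) : (B (c • β) (c • β)).re ≤ c₀ * K * ‖c‖ ^ 2 :=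
  calc (B (c • β) (c • β)).re ≤ ‖B (c • β) (c • β)‖ := re_le_norm _
    _ ≤ K * (‖c‖ ^ 2 * ∑ j, ‖β j‖ ^ 2) := by
      simpa only [Pi.smul_apply, smul_eq_mul, norm_mul, mul_pow, ← Finset.mul_sum] using hB (c • β)
    _ ≤ K * (‖c‖ ^ 2 * c₀) := by gcongr
    _ = c₀ * K * ‖c‖ ^ 2 := by ring

-- The paper's `⟨Mξ, τ⟩` is `B τ ξ`: Mathlib's sesquilinear forms are conjugate-linear on the left.
theorem Matrix.toLinearMapₛₗ₂'_starRingEnd_apply {n p : Type*} [Fintype n] [Fintype p]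
    [DecidableEq n] [DecidableEq p] (A : Matrix n p ℂ) (τ : n → ℂ) (ξ : p → ℂ) :
    Matrix.toLinearMapₛₗ₂' ℂ (starRingEnd ℂ) (RingHom.id ℂ) A τ ξ =
      ∑ j, ∑ k, conj (τ j) * A j k * ξ k := by
  simp only [Matrix.toLinearMapₛₗ₂'_apply, RingHom.id_apply, smul_eq_mul]
  exact Finset.sum_congr rfl fun _ _ => Finset.sum_congr rfl fun _ _ => by ring

theorem stmt_14_general {X : Type*} [MeasurableSpace X] (μ : Measure X)
    (m : ℕ) (φ δ ρ₀ c₀ : ℝ)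
    (hδ : δ ∈ Set.Ioc (0:ℝ) 1)
    (M : X → Matrix (Fin m) (Fin m) ℂ)
    (hM : ∀ᵐ x ∂μ, ∀ ξ : Fin m → ℂ,
      0 ≤ (∑ j, ∑ k, (starRingEnd ℂ) (ξ j) * M x j k * ξ k).re ∧
      |(∑ j, ∑ k, (starRingEnd ℂ) (ξ j) * M x j k * ξ k).im| ≤
        Real.tan φ * (∑ j, ∑ k, (starRingEnd ℂ) (ξ j) * M x j k * ξ k).re ∧
      ‖∑ j, ∑ k, (starRingEnd ℂ) (ξ j) * M x j k * ξ k‖ ≤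
        δ⁻¹ * ∑ j, ‖ξ j‖ ^ 2)
    (ρ : X → ℂ) (hρ : ∀ᵐ x ∂μ, ‖ρ x‖ ≤ ρ₀)
    (b : X → Fin m → ℂ) (hb : ∀ᵐ x ∂μ, ∑ j, ‖b x j‖ ^ 2 ≤ c₀)
    (u : X → ℂ) (hu : Integrable (fun x => ‖u x‖ ^ 2) μ)
    (F : X → Fin m → ℂ)
    (hFint : Integrable
      (fun x => (∑ j, ∑ k, (starRingEnd ℂ) (F x j) * M x j k * F x k).re) μ) :
    ∀ ε : ℝ, 0 < ε →
      ‖(∫ x, ρ x * ∑ j, ∑ k, (starRingEnd ℂ) (u x * b x j) * M x j k * F x k ∂μ)‖ ≤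
        ε * (∫ x, (∑ j, ∑ k, (starRingEnd ℂ) (F x j) * M x j k * F x k).re ∂μ) +
        (ρ₀ ^ 2 * c₀ * δ⁻¹ * (1 + Real.tan φ) ^ 2 / (4 * ε)) *
          ∫ x, ‖u x‖ ^ 2 ∂μ := by
  intro ε hε
  set C := ρ₀ ^ 2 * c₀ * δ⁻¹ * (1 + Real.tan φ) ^ 2 / (4 * ε)
  have hpointwise : ∀ᵐ x ∂μ,
      ‖ρ x * ∑ j, ∑ k, conj (u x * b x j) * M x j k * F x k‖ ≤
        ε * (∑ j, ∑ k, conj (F x j) * M x j k * F x k).re + C * ‖u x‖ ^ 2 := by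
    filter_upwards [hM, hρ, hb] with x hMx hρx hbx
    set B := Matrix.toLinearMapₛₗ₂' ℂ (starRingEnd ℂ) (RingHom.id ℂ) (M x)
    have hsect : IsSectorial B (Real.tan φ) := fun ξ => by
      simpa only [B, Matrix.toLinearMapₛₗ₂'_starRingEnd_apply] using ⟨(hMx ξ).1, (hMx ξ).2.1⟩
    have hbound : ∀ ξ, ‖B ξ ξ‖ ≤ δ⁻¹ * ∑ j, ‖ξ j‖ ^ 2 := fun ξ => by
      simpa only [B, Matrix.toLinearMapₛₗ₂'_starRingEnd_apply] using (hMx ξ).2.2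
    have hub := re_apply_smul_self_le (inv_nonneg.2 hδ.1.le) hbound (u x) hbx
    have hcross := hsect.norm_mul_apply_le hρx hub hε (F x)
    simp only [B, Matrix.toLinearMapₛₗ₂'_starRingEnd_apply, Pi.smul_apply, smul_eq_mul] at hcross
    exact hcross.trans_eq (by ring)
  calc _ ≤ ∫ x, (ε * (∑ j, ∑ k, conj (F x j) * M x j k * F x k).re + C * ‖u x‖ ^ 2) ∂μ :=
        norm_integral_le_of_norm_le ((hFint.const_mul ε).add (hu.const_mul C)) hpointwise
    _ = _ := by
      rw [integral_add (hFint.const_mul ε) (hu.const_mul C), integral_const_mul,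
        integral_const_mul]

/-- Relative bound of the first-order cross term against the principal sectorial form
(the abstracted content of Lemma 4.2). -/
theorem stmt_14 {X : Type*} [MeasurableSpace X] (μ : Measure X)
    (m : ℕ) (hm : 1 ≤ m) (φ δ ρ₀ c₀ : ℝ)
    (hφ : φ ∈ Set.Ico (0:ℝ) (Real.pi / 2)) (hδ : δ ∈ Set.Ioc (0:ℝ) 1)
    (hρ₀ : 0 ≤ ρ₀) (hc₀ : 0 ≤ c₀)
    (M : X → Matrix (Fin m) (Fin m) ℂ)
    (hM : ∀ᵐ x ∂μ, ∀ ξ : Fin m → ℂ,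
      0 ≤ (∑ j, ∑ k, (starRingEnd ℂ) (ξ j) * M x j k * ξ k).re ∧
      |(∑ j, ∑ k, (starRingEnd ℂ) (ξ j) * M x j k * ξ k).im| ≤
        Real.tan φ * (∑ j, ∑ k, (starRingEnd ℂ) (ξ j) * M x j k * ξ k).re ∧
      ‖∑ j, ∑ k, (starRingEnd ℂ) (ξ j) * M x j k * ξ k‖ ≤
        δ⁻¹ * ∑ j, ‖ξ j‖ ^ 2)
    (ρ : X → ℂ) (hρ : ∀ᵐ x ∂μ, ‖ρ x‖ ≤ ρ₀)
    (b : X → Fin m → ℂ) (hb : ∀ᵐ x ∂μ, ∑ j, ‖b x j‖ ^ 2 ≤ c₀)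
    (u : X → ℂ) (hu : Integrable (fun x => ‖u x‖ ^ 2) μ)
    (F : X → Fin m → ℂ) (hFmeas : AEMeasurable F μ)
    (hFint : Integrable
      (fun x => (∑ j, ∑ k, (starRingEnd ℂ) (F x j) * M x j k * F x k).re) μ)
    (hcross : Integrable
      (fun x => ρ x * ∑ j, ∑ k, (starRingEnd ℂ) (u x * b x j) * M x j k * F x k) μ) :
    ∀ ε : ℝ, 0 < ε →
      ‖(∫ x, ρ x * ∑ j, ∑ k, (starRingEnd ℂ) (u x * b x j) * M x j k * F x k ∂μ)‖ ≤
        ε * (∫ x, (∑ j, ∑ k, (starRingEnd ℂ) (F x j) * M x j k * F x k).re ∂μ) +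
        (ρ₀ ^ 2 * c₀ * δ⁻¹ * (1 + Real.tan φ) ^ 2 / (4 * ε)) *
          ∫ x, ‖u x‖ ^ 2 ∂μ :=
  stmt_14_general μ m φ δ ρ₀ c₀ hδ M hM ρ hρ b hb u hu F hFint
end
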